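/- For all n ≥ 1 and r ≥ 1, the cube of the 3-norm of the (n,r)-Fibonacci vector q_{n,r} = (F_{n+1}, …, F_{n+r}) satisfies ∑_{i=n+1}^{n+r} F_i^3 = (1/2)(F_{n+r} · F_{n+r+1}^2 + (−1)^{n+r+1} · F_{n+r−1}) − (1/2)(F_n · F_{n+1}^2 + (−1)^{n+1} · F_{n−1}). -/

import Mathlib

/-!
With `P m = (F_m F_{m+1}^2 + (-1)^{m+1} F_{m-1}) / 2`, Cassini's identity
`F_{m+1} F_{m-1} - F_m^2 = (-1)^m` gives `P (m + 1) - P m = F_{m+1}^3`, so the sum of cubes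
telescopes to `P (n + r) - P n`.
-/

open Finset

theorem Nat.fib_add_two_mul_fib_sub_fib_add_one_sq {R : Type*} [CommRing R] (k : ℕ) :
    (fib (k + 2) : R) * fib k - fib (k + 1) ^ 2 = (-1) ^ (k + 1) := by
  induction k with
  | zero => simp
  | succ k ih =>
    push_cast [fib_add_two] at ih ⊢
    linear_combination -ih

/-- At `m = 0` the truncated `m - 1` reads `F_{-1} = 1` as `F_0 = 0`, so the telescoping
identity below needs `1 ≤ m`. -/
noncomputable def fibCubeSumPrimitive (m : ℕ) : ℝ :=
  (1 / 2) * ((Nat.fib m : ℝ) * (Nat.fib (m + 1) : ℝ) ^ 2 +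
    (-1 : ℝ) ^ (m + 1) * (Nat.fib (m - 1) : ℝ))

theorem fibCubeSumPrimitive_add_one_sub {m : ℕ} (hm : 1 ≤ m) :
    fibCubeSumPrimitive (m + 1) - fibCubeSumPrimitive m = (Nat.fib (m + 1) : ℝ) ^ 3 := by
  obtain ⟨k, rfl⟩ := Nat.exists_eq_add_of_le' hm
  have cassini := Nat.fib_add_two_mul_fib_sub_fib_add_one_sq (R := ℝ) k
  simp only [fibCubeSumPrimitive, Nat.add_sub_cancel]
  push_cast [Nat.fib_add_two] at cassini ⊢
  linear_combination (-(1 / 2) * ((Nat.fib k : ℝ) + Nat.fib (k + 1))) * cassini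

theorem sum_Icc_fib_pow_three {n : ℕ} (hn : 1 ≤ n) (r : ℕ) :
    ∑ i ∈ Icc (n + 1) (n + r), (Nat.fib i : ℝ) ^ 3 =
      fibCubeSumPrimitive (n + r) - fibCubeSumPrimitive n := by
  rw [← Ico_add_one_right_eq_Icc, ← sum_Ico_add', ← sum_Ico_sub _ (Nat.le_add_right n r)]
  refine sum_congr rfl fun i hi ↦ (fibCubeSumPrimitive_add_one_sub ?_).symm
  exact hn.trans (mem_Ico.mp hi).1

theorem fib_vec_threenorm_cube_general (n r : ℕ) (hn : 1 ≤ n) :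
    ∑ i ∈ Finset.Icc (n + 1) (n + r), (Nat.fib i : ℝ) ^ 3 =
      (1 / 2) * ((Nat.fib (n + r) : ℝ) * (Nat.fib (n + r + 1) : ℝ) ^ 2 +
          (-1 : ℝ) ^ (n + r + 1) * (Nat.fib (n + r - 1) : ℝ)) -
      (1 / 2) * ((Nat.fib n : ℝ) * (Nat.fib (n + 1) : ℝ) ^ 2 +
          (-1 : ℝ) ^ (n + 1) * (Nat.fib (n - 1) : ℝ)) :=
  sum_Icc_fib_pow_three hn r

/-- For `n ≥ 1` and `r ≥ 1`,
`∑_{i=n+1}^{n+r} (F i)^3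
  = (1/2)*(F (n+r) * (F (n+r+1))^2 + (-1)^(n+r+1) * F (n+r-1))
    - (1/2)*(F n * (F (n+1))^2 + (-1)^(n+1) * F (n-1))`. -/
theorem fib_vec_threenorm_cube (n r : ℕ) (hn : 1 ≤ n) (hr : 1 ≤ r) :
    ∑ i ∈ Finset.Icc (n + 1) (n + r), (Nat.fib i : ℝ) ^ 3 =
      (1 / 2) * ((Nat.fib (n + r) : ℝ) * (Nat.fib (n + r + 1) : ℝ) ^ 2 +
          (-1 : ℝ) ^ (n + r + 1) * (Nat.fib (n + r - 1) : ℝ)) -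
      (1 / 2) * ((Nat.fib n : ℝ) * (Nat.fib (n + 1) : ℝ) ^ 2 +
          (-1 : ℝ) ^ (n + 1) * (Nat.fib (n - 1) : ℝ)) :=
  fib_vec_threenorm_cube_general n r hn
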